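/- Let H̃ ∈ Ω_{2n} be an invertible Hermitian complex matrix and B̃ ∈ Ω_{2n} an H̃-selfadjoint matrix whose spectrum (as a 2n×2n complex matrix) consists only of positive real numbers. Then for every positive integer m there exists an H̃-selfadjoint matrix Ã ∈ Ω_{2n} with Ã^m = B̃. -/

import Mathlib

open Matrix

noncomputable section

/-- The `k×k` upper-triangular Jordan block with eigenvalue `lam`. -/
def jordanBlock {R : Type*} [Zero R] [One R] (lam : R) (k : ℕ) : Matrix (Fin k) (Fin k) R :=
  Matrix.of fun i j => if (i : ℕ) = (j : ℕ) then lam else if (i : ℕ) + 1 = (j : ℕ) then 1 else 0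

/-- The `k×k` sip matrix: ones on the main anti-diagonal, zeros elsewhere. -/
def sip (R : Type*) [Zero R] [One R] (k : ℕ) : Matrix (Fin k) (Fin k) R :=
  Matrix.of fun i j => if (i : ℕ) + (j : ℕ) = k - 1 then 1 else 0

/-- The order-preserving identification of `Fin k ⊕ Fin k` with `Fin (2*k)`. -/
def finTwoMul (k : ℕ) : (Fin k ⊕ Fin k) ≃ Fin (2 * k) :=
  finSumFinEquiv.trans (finCongr (two_mul k).symm)

/-- Block-diagonal direct sum `M ⊕ N` of two `k×k` matrices, as a `(2k)×(2k)` matrix. -/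
def dsum2 {R : Type*} [Zero R] {k : ℕ} (M N : Matrix (Fin k) (Fin k) R) :
    Matrix (Fin (2 * k)) (Fin (2 * k)) R :=
  Matrix.reindex (finTwoMul k) (finTwoMul k) (Matrix.fromBlocks M 0 0 N)

/-- The `2n×2n` complex matrix `[[A₁, conj A₂], [−A₂, conj A₁]]`. -/
def omegaMap {n : ℕ} (A₁ A₂ : Matrix (Fin n) (Fin n) ℂ) :
    Matrix (Fin (2 * n)) (Fin (2 * n)) ℂ :=
  Matrix.reindex (finTwoMul n) (finTwoMul n)
    (Matrix.fromBlocks A₁ (A₂.map (starRingEnd ℂ)) (-A₂) (A₁.map (starRingEnd ℂ)))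

/-- Membership in the real subalgebra `Ω_{2n}` of `2n×2n` complex matrices. -/
def InOmega {n : ℕ} (M : Matrix (Fin (2 * n)) (Fin (2 * n)) ℂ) : Prop :=
  ∃ A₁ A₂ : Matrix (Fin n) (Fin n) ℂ, M = omegaMap A₁ A₂

/-! The root is a real polynomial in `B̃`: such a matrix lies in the real algebra `Ω_{2n}`, and it
is `H̃`-selfadjoint because `H̃` intertwines `B̃` with `B̃*`. To find the polynomial, interpolate
`t ↦ t^(1/m)` on the positive eigenvalues by a real polynomial `p₀`. Then `p₀(B̃)^m - B̃` vanishes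
on the spectrum, hence is nilpotent, and Newton's iteration in the commutative algebra `ℝ[B̃]`
corrects `p₀(B̃)` to an exact `m`-th root. -/

open Polynomial

section Omega

variable {n : ℕ}

lemma omegaMap_add (A₁ A₂ B₁ B₂ : Matrix (Fin n) (Fin n) ℂ) :
    omegaMap A₁ A₂ + omegaMap B₁ B₂ = omegaMap (A₁ + B₁) (A₂ + B₂) := by
  simp only [omegaMap, ← coe_reindexLinearEquiv ℂ ℂ, ← map_add, fromBlocks_add, neg_add,
    Matrix.map_add _ (map_add _)]

lemma omegaMap_mul (A₁ A₂ B₁ B₂ : Matrix (Fin n) (Fin n) ℂ) :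
    omegaMap A₁ A₂ * omegaMap B₁ B₂ =
      omegaMap (A₁ * B₁ - A₂.map (starRingEnd ℂ) * B₂)
        (A₂ * B₁ + A₁.map (starRingEnd ℂ) * B₂) := by
  simp only [omegaMap, reindex_apply, submatrix_mul_equiv, fromBlocks_multiply]
  congr 2 <;>
    simp [Matrix.map_mul, Matrix.map_add, Matrix.map_sub, Matrix.map_map, Function.comp_def] <;>
    abel

lemma omegaMap_algebraMap (r : ℝ) :
    omegaMap (algebraMap ℝ (Matrix (Fin n) (Fin n) ℂ) r) 0 = algebraMap ℝ _ r := by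
  simp [omegaMap, algebraMap_eq_diagonal, diagonal_map, fromBlocks_diagonal, Pi.algebraMap_def]

variable (n) in
def omegaSubalgebra : Subalgebra ℝ (Matrix (Fin (2 * n)) (Fin (2 * n)) ℂ) where
  carrier := {M | InOmega M}
  mul_mem' := by
    rintro _ _ ⟨A₁, A₂, rfl⟩ ⟨B₁, B₂, rfl⟩
    exact ⟨_, _, omegaMap_mul A₁ A₂ B₁ B₂⟩
  add_mem' := by
    rintro _ _ ⟨A₁, A₂, rfl⟩ ⟨B₁, B₂, rfl⟩
    exact ⟨_, _, omegaMap_add A₁ A₂ B₁ B₂⟩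
  algebraMap_mem' r := ⟨_, 0, (omegaMap_algebraMap r).symm⟩

lemma InOmega.aeval {B : Matrix (Fin (2 * n)) (Fin (2 * n)) ℂ} (hB : InOmega B) (p : ℝ[X]) :
    InOmega (aeval B p) :=
  Algebra.adjoin_le (S := omegaSubalgebra n) (Set.singleton_subset_iff.2 hB)
    (aeval_mem_adjoin_singleton ℝ B)

end Omega

theorem Polynomial.star_aeval {R A : Type*} [CommSemiring R] [StarRing R] [TrivialStar R]
    [Semiring A] [StarRing A] [Algebra R A] [StarModule R A] (a : A) (p : R[X]) :
    star (aeval a p) = aeval (star a) p := by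
  simp only [aeval_eq_sum_range, star_sum, star_smul, star_pow, star_trivial]

theorem SemiconjBy.aeval {R A : Type*} [CommSemiring R] [Semiring A] [Algebra R A] {h a b : A}
    (hab : SemiconjBy h a b) (p : R[X]) : SemiconjBy h (aeval a p) (aeval b p) := by
  induction p using Polynomial.induction_on' with
  | add p q hp hq => simpa only [map_add] using hp.add_right hq
  | monomial k r =>
    simpa only [aeval_monomial] using
      SemiconjBy.mul_right (Algebra.commute_algebraMap_right r h) (hab.pow_right k)

theorem Subalgebra.isUnit_of_isUnit_val {K A : Type*} [Field K] [Ring A] [Algebra K A]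
    [FiniteDimensional K A] {S : Subalgebra K A} {a : S} (ha : IsUnit (a : A)) : IsUnit a :=
  IsArtinianRing.isUnit_of_nonZeroDivisor_of_isIntegral' (R := K)
    (comap_nonZeroDivisors_le_of_injective (f := S.val) Subtype.val_injective
      ha.mem_nonZeroDivisors)

theorem exists_pow_eq_of_isNilpotent_pow_sub {S : Type*} [CommRing S] {m : ℕ} (hm : m ≠ 0)
    (hmS : IsUnit (m : S)) {x b : S} (hb : IsUnit b) (h : IsNilpotent (x ^ m - b)) :
    ∃ y, y ^ m = b := by
  have hx : IsUnit x := by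
    rw [← isUnit_pow_iff hm, ← sub_add_cancel (x ^ m) b]
    exact h.isUnit_add_right_of_commute hb (Commute.all _ _)
  obtain ⟨y, -, hy⟩ := (existsUnique_nilpotent_sub_and_aeval_eq_zero (x := x) (P := X ^ m - C b)
    (by simpa using h) (by simpa [derivative_X_pow] using hmS.mul (hx.pow _))).exists
  exact ⟨y, by simpa [sub_eq_zero] using hy⟩

theorem Matrix.isNilpotent_aeval_of_forall_isRoot {K ι : Type*} [Field K] [IsAlgClosed K]
    [Fintype ι] [DecidableEq ι] (B : Matrix ι ι K) {g : K[X]}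
    (hg : ∀ μ ∈ spectrum K B, g.IsRoot μ) : IsNilpotent (aeval B g) := by
  have hdvd : B.charpoly ∣ g ^ Fintype.card ι := calc
    B.charpoly = (B.charpoly.roots.map (X - C ·)).prod :=
      (IsAlgClosed.splits _).eq_prod_roots_of_monic B.charpoly_monic
    _ ∣ (B.charpoly.roots.map fun _ ↦ g).prod :=
      Multiset.prod_dvd_prod_of_dvd _ _ fun μ hμ ↦ dvd_iff_isRoot.2 <|
        hg μ (mem_spectrum_of_isRoot_charpoly (isRoot_of_mem_roots hμ))
    _ = g ^ Multiset.card B.charpoly.roots := by simp [Multiset.map_const']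
    _ ∣ g ^ Fintype.card ι :=
      pow_dvd_pow g ((card_roots' _).trans (charpoly_natDegree_eq_dim B).le)
  obtain ⟨q, hq⟩ := hdvd
  exact ⟨Fintype.card ι, by rw [← map_pow, hq, map_mul, aeval_self_charpoly, zero_mul]⟩

theorem exists_aeval_pow_eq_of_finite_of_pos {m : ℕ} (hm : m ≠ 0) {s : Set ℂ} (hs : s.Finite)
    (hpos : ∀ μ ∈ s, μ.im = 0 ∧ 0 < μ.re) : ∃ p : ℝ[X], ∀ μ ∈ s, aeval μ p ^ m = μ := by
  classical
  let T := hs.toFinset.image Complex.re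
  refine ⟨Lagrange.interpolate T id (· ^ (m⁻¹ : ℝ)), fun μ hμ ↦ ?_⟩
  obtain ⟨him, hre⟩ := hpos μ hμ
  have hμ_real : ((μ.re : ℝ) : ℂ) = μ := Complex.ext rfl (by simp [him])
  have heval : eval μ.re (Lagrange.interpolate T id (· ^ (m⁻¹ : ℝ))) = μ.re ^ (m⁻¹ : ℝ) :=
    Lagrange.eval_interpolate_at_node _ (Set.injOn_id _)
      (Finset.mem_image_of_mem _ (hs.mem_toFinset.2 hμ))
  rw [← hμ_real, ← Complex.coe_algebraMap, aeval_algebraMap_apply_eq_algebraMap_eval, heval,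
    ← map_pow, Real.rpow_inv_natCast_pow hre.le hm]

theorem Matrix.exists_aeval_pow_eq {ι : Type*} [Fintype ι] [DecidableEq ι] {m : ℕ} (hm : m ≠ 0)
    (B : Matrix ι ι ℂ) (hspec : ∀ μ ∈ spectrum ℂ B, μ.im = 0 ∧ 0 < μ.re) :
    ∃ P : ℝ[X], aeval B P ^ m = B := by
  obtain ⟨p₀, hp₀⟩ := exists_aeval_pow_eq_of_finite_of_pos hm B.finite_spectrum hspec
  let S := Algebra.adjoin ℝ {B}
  let b : S := ⟨B, Algebra.self_mem_adjoin_singleton ℝ B⟩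
  have hb : IsUnit b := Subalgebra.isUnit_of_isUnit_val <| by
    by_contra h
    exact (hspec 0 ((spectrum.zero_mem_iff ℂ).2 h)).2.false
  have hmS : IsUnit (m : S) := by
    simpa using (IsUnit.mk0 (m : ℝ) (by exact_mod_cast hm)).map (algebraMap ℝ S)
  have hnil : IsNilpotent (aeval b p₀ ^ m - b) := by
    rw [← IsNilpotent.map_iff (f := S.val) Subtype.val_injective]
    have h := B.isNilpotent_aeval_of_forall_isRoot
      (g := (p₀ ^ m - X).map (algebraMap ℝ ℂ)) fun μ hμ ↦ by simp [hp₀ μ hμ]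
    rw [aeval_map_algebraMap] at h
    simpa [b, aeval_subalgebra_coe] using h
  obtain ⟨y, hy⟩ := exists_pow_eq_of_isNilpotent_pow_sub hm hmS hb hnil
  have hy_range : (y : Matrix ι ι ℂ) ∈ (aeval (R := ℝ) B).range := by
    rw [← Algebra.adjoin_singleton_eq_range_aeval]
    exact y.2
  obtain ⟨P, hP⟩ := (AlgHom.mem_range _).1 hy_range
  exact ⟨P, by rw [hP]; exact congrArg Subtype.val hy⟩

theorem exists_root_positive_spectrum_general {n : ℕ} (m : ℕ) (hm : 0 < m)
    (H B : Matrix (Fin (2 * n)) (Fin (2 * n)) ℂ)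
    (hBΩ : InOmega B) (hBsa : H * B = Bᴴ * H)
    (hspec : ∀ μ ∈ spectrum ℂ B, μ.im = 0 ∧ 0 < μ.re) :
    ∃ A : Matrix (Fin (2 * n)) (Fin (2 * n)) ℂ,
      InOmega A ∧ H * A = Aᴴ * H ∧ A ^ m = B := by
  obtain ⟨P, hP⟩ := B.exists_aeval_pow_eq hm.ne' hspec
  refine ⟨aeval B P, hBΩ.aeval P, ?_, hP⟩
  rw [← star_eq_conjTranspose, star_aeval]
  exact SemiconjBy.aeval hBsa P

/-- **Theorem 3.3.** An `H̃`-selfadjoint matrix in `Ω_{2n}` whose spectrum consists only of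
positive real numbers has an `H̃`-selfadjoint `m`th root in `Ω_{2n}`. -/
theorem exists_root_positive_spectrum {n : ℕ} (m : ℕ) (hm : 0 < m)
    (H B : Matrix (Fin (2 * n)) (Fin (2 * n)) ℂ)
    (hHΩ : InOmega H) (hHu : IsUnit H) (hHherm : H.IsHermitian)
    (hBΩ : InOmega B) (hBsa : H * B = Bᴴ * H)
    (hspec : ∀ μ ∈ spectrum ℂ B, μ.im = 0 ∧ 0 < μ.re) :
    ∃ A : Matrix (Fin (2 * n)) (Fin (2 * n)) ℂ,
      InOmega A ∧ H * A = Aᴴ * H ∧ A ^ m = B :=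
  exists_root_positive_spectrum_general m hm H B hBΩ hBsa hspec
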